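/- Let N be even, and let A ∈ SU(N) be unitary with A = c J Ā J for a scalar c, where J is the standard symplectic form matrix. If either (N ≡ 0 mod 4 and c = e^{2πi/N}) or (N ≡ 2 mod 4 and c = 1), then no such A exists; i.e. the fixed-point set of the map A ↦ c J Ā J on SU(N) is empty in these cases. -/

import Mathlib

/-!
Rescale `A` to `B = s • A` with `conj s = -(s * c)` and `s ^ N = -1`; then `B * J = J * B̄` and
`det B = -1`. Since `J * J̄ = -1`, the antilinear map `x ↦ J x̄` squares to `-1` and commutes with
`B`, so it makes every generalized eigenspace of `B` for a real eigenvalue a vector space over the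
quaternions, which has even complex dimension. Hence the real eigenvalues of `B` have even
multiplicity while the non-real ones come in conjugate pairs, so `det B ≥ 0`: a contradiction.
-/

open Matrix

/-- The block-diagonal matrix `J = blockdiag(J₂, …, J₂)` with `J₂ = [[0,1],[-1,0]]`
(the standard symplectic form matrix), as an `N × N` complex matrix. -/
def blockJ (N : ℕ) : Matrix (Fin N) (Fin N) ℂ :=
  Matrix.of fun i j : Fin N =>
    if (i : ℕ) % 2 = 0 ∧ (j : ℕ) = (i : ℕ) + 1 then (1 : ℂ)
    else if (i : ℕ) % 2 = 1 ∧ (i : ℕ) = (j : ℕ) + 1 then -1 else 0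

open Module
open scoped ComplexOrder Quaternion

theorem even_finrank_of_semilinear_sq_eq_neg {W : Type*} [AddCommGroup W] [Module ℂ W]
    (j : W →ₗ⋆[ℂ] W) (hj : ∀ x, j (j x) = -x) : Even (finrank ℂ W) := by
  let jℝ : Module.End ℝ W :=
    { toFun := j
      map_add' := j.map_add
      map_smul' := fun r x => by
        rw [← Complex.coe_smul, map_smulₛₗ, Complex.conj_ofReal, Complex.coe_smul]
        rfl }
  let iℝ : Module.End ℝ W := (Complex.I • LinearMap.id : W →ₗ[ℂ] W).restrictScalars ℝ
  let q : QuaternionAlgebra.Basis (Module.End ℝ W) (-1 : ℝ) 0 (-1) :=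
    { i := iℝ
      j := jℝ
      k := iℝ * jℝ
      i_mul_i := by
        ext x
        simp [iℝ, smul_smul]
      j_mul_j := by
        ext x
        simp [jℝ, hj]
      i_mul_j := rfl
      j_mul_i := by
        ext x
        simp [iℝ, jℝ] }
  let _ : Module ℍ[ℝ] W := Module.compHom W (QuaternionAlgebra.lift q).toRingHom
  have : IsScalarTower ℝ ℍ[ℝ] W :=
    ⟨fun r a x => congrArg (· x) (map_smul (QuaternionAlgebra.lift q) r a)⟩
  -- `W` is now a module over `ℍ[ℝ]`, so its real dimension `2 * finrank ℂ W` is divisible by 4.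
  have hℂ := Module.finrank_mul_finrank ℝ ℂ W
  have hℍ := Module.finrank_mul_finrank ℝ ℍ[ℝ] W
  rw [Complex.finrank_real_complex] at hℂ
  rw [Quaternion.finrank_eq_four] at hℍ
  exact ⟨finrank ℍ[ℝ] W, by omega⟩

theorem Multiset.prod_nonneg_of_map_conj_eq {R : Multiset ℂ} (hR : R.map (starRingEnd ℂ) = R)
    (heven : ∀ r : ℝ, Even (R.count (r : ℂ))) : 0 ≤ R.prod := by
  classical
  have hsplit : R = R.filter (0 < ·.im) + R.filter (·.im < 0) + R.filter (·.im = 0) := by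
    ext z
    simp only [Multiset.count_add, Multiset.count_filter]
    split_ifs <;> first | (exfalso; grind) | simp
  have hlower : R.filter (·.im < 0) = (R.filter (0 < ·.im)).map (starRingEnd ℂ) := by
    conv_lhs => rw [← hR]
    rw [Multiset.filter_map]
    congr 1
    ext z
    simp
  have hreal : 0 ≤ (R.filter (·.im = 0)).prod := by
    rw [Finset.prod_multiset_count]
    refine Finset.prod_nonneg fun z hz => ?_
    obtain ⟨-, hz⟩ := Multiset.mem_filter.mp (Multiset.mem_toFinset.mp hz)
    obtain ⟨r, rfl⟩ : ∃ r : ℝ, z = r := ⟨z.re, Complex.ext rfl (by simpa using hz)⟩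
    rw [Multiset.count_filter_of_pos (p := fun x : ℂ => x.im = 0) hz, ← Complex.ofReal_pow]
    exact Complex.zero_le_real.mpr ((heven r).pow_nonneg r)
  rw [hsplit, Multiset.prod_add, Multiset.prod_add, hlower, ← map_multiset_prod, Complex.mul_conj]
  exact mul_nonneg (Complex.zero_le_real.mpr (Complex.normSq_nonneg _)) hreal

namespace Matrix

variable {n : Type*} [Fintype n]

theorem star_mulVec_eq_map_conj_mulVec (M : Matrix n n ℂ) (v : n → ℂ) :
    star (M *ᵥ v) = M.map (starRingEnd ℂ) *ᵥ star v := by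
  funext i
  simp [mulVec, dotProduct, star_sum]

def mulVecStar (J : Matrix n n ℂ) : (n → ℂ) →ₗ⋆[ℂ] (n → ℂ) where
  toFun x := J *ᵥ star x
  map_add' x y := by rw [star_add, mulVec_add]
  map_smul' a x := by rw [star_smul, mulVec_smul]; rfl

variable {J B : Matrix n n ℂ}

theorem mulVecStar_mulVec (hB : B * J = J * B.map (starRingEnd ℂ)) (x : n → ℂ) :
    J.mulVecStar (B *ᵥ x) = B *ᵥ J.mulVecStar x := by
  simp only [mulVecStar, LinearMap.coe_mk, AddHom.coe_mk]
  rw [star_mulVec_eq_map_conj_mulVec, mulVec_mulVec, mulVec_mulVec, hB]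

variable [DecidableEq n]

theorem mulVecStar_mulVecStar (hJ : J * J.map (starRingEnd ℂ) = -1) (x : n → ℂ) :
    J.mulVecStar (J.mulVecStar x) = -x := by
  simp only [mulVecStar, LinearMap.coe_mk, AddHom.coe_mk]
  rw [star_mulVec_eq_map_conj_mulVec, star_star, mulVec_mulVec, hJ, neg_mulVec, one_mulVec]

theorem mulVecStar_mem_maxGenEigenspace (hB : B * J = J * B.map (starRingEnd ℂ)) (t : ℝ)
    {x : n → ℂ} (hx : x ∈ Module.End.maxGenEigenspace (toLin' B) (t : ℂ)) :
    J.mulVecStar x ∈ Module.End.maxGenEigenspace (toLin' B) (t : ℂ) := by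
  set φ : Module.End ℂ (n → ℂ) := toLin' B - (t : ℂ) • 1
  have hcomm (y : n → ℂ) : J.mulVecStar (φ y) = φ (J.mulVecStar y) := by
    simp only [φ, LinearMap.sub_apply, LinearMap.smul_apply, Module.End.one_apply, map_sub,
      map_smulₛₗ, Complex.conj_ofReal, toLin'_apply, mulVecStar_mulVec hB]
  have hpow (k : ℕ) (y : n → ℂ) : J.mulVecStar ((φ ^ k) y) = (φ ^ k) (J.mulVecStar y) := by
    induction k generalizing y with
    | zero => rfl
    | succ k ih => rw [pow_succ', Module.End.mul_apply, Module.End.mul_apply, hcomm, ih]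
  rw [Module.End.mem_maxGenEigenspace] at hx ⊢
  obtain ⟨k, hk⟩ := hx
  exact ⟨k, by rw [← hpow, hk, map_zero]⟩

theorem even_rootMultiplicity_charpoly (hJ : J * J.map (starRingEnd ℂ) = -1)
    (hB : B * J = J * B.map (starRingEnd ℂ)) (t : ℝ) :
    Even (B.charpoly.rootMultiplicity (t : ℂ)) := by
  rw [← charpoly_toLin', ← LinearMap.finrank_maxGenEigenspace_eq]
  exact even_finrank_of_semilinear_sq_eq_neg
    (J.mulVecStar.restrict fun x hx => mulVecStar_mem_maxGenEigenspace hB t hx)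
    fun x => Subtype.ext (mulVecStar_mulVecStar hJ x)

theorem charpoly_map_conj (hJ : J * J.map (starRingEnd ℂ) = -1)
    (hB : B * J = J * B.map (starRingEnd ℂ)) :
    B.charpoly.map (starRingEnd ℂ) = B.charpoly := by
  have hJ' : J.map (starRingEnd ℂ) * J = -1 := by
    rw [← neg_eq_iff_eq_neg, ← mul_neg, mul_eq_one_comm, neg_mul, hJ, neg_neg]
  have hBconj : B.map (starRingEnd ℂ) = -J.map (starRingEnd ℂ) * (B * J) := by
    rw [hB, ← mul_assoc, neg_mul, hJ', neg_neg, one_mul]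
  rw [← charpoly_map, hBconj, charpoly_mul_comm, mul_assoc, mul_neg, hJ, neg_neg, mul_one]

theorem det_nonneg_of_mul_eq_mul_map_conj (hJ : J * J.map (starRingEnd ℂ) = -1)
    (hB : B * J = J * B.map (starRingEnd ℂ)) : 0 ≤ B.det := by
  rw [det_eq_prod_roots_charpoly]
  refine Multiset.prod_nonneg_of_map_conj_eq ?_ fun r => ?_
  · rw [← (IsAlgClosed.splits B.charpoly).roots_map, charpoly_map_conj hJ hB]
  · rw [Polynomial.count_roots]
    exact even_rootMultiplicity_charpoly hJ hB r

theorem smul_mul_eq_mul_map_conj_smul {A : Matrix n n ℂ} {c s : ℂ} (hJ : J * J = -1)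
    (hA : A = c • (J * A.map (starRingEnd ℂ) * J)) (hs : starRingEnd ℂ s = -(s * c)) :
    (s • A) * J = J * (s • A).map (starRingEnd ℂ) := by
  rw [Matrix.map_smul' _ _ _ (map_mul _), hs, Matrix.mul_smul, Matrix.smul_mul]
  nth_rewrite 1 [hA]
  rw [Matrix.smul_mul, mul_assoc _ J, hJ, mul_neg_one, smul_neg, smul_neg, smul_smul, neg_smul]

end Matrix

theorem blockJ_mul_self {N : ℕ} (hN : Even N) : blockJ N * blockJ N = -1 := by
  ext i j
  let p : Fin N := ⟨if (i : ℕ) % 2 = 0 then i + 1 else i - 1, by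
    obtain ⟨m, hm⟩ := hN; have := i.isLt; split_ifs <;> omega⟩
  rw [mul_apply, neg_apply, one_apply, Finset.sum_eq_single p]
  · simp only [blockJ, of_apply, p, Fin.ext_iff]
    split_ifs <;> first | omega | norm_num
  · intro k _ hk
    simp only [blockJ, of_apply, p, ne_eq, Fin.ext_iff] at hk ⊢
    split_ifs at hk ⊢ <;> first | omega | norm_num
  · simp

theorem blockJ_map_conj (N : ℕ) : (blockJ N).map (starRingEnd ℂ) = blockJ N := by
  ext i j
  simp only [blockJ, map_apply, of_apply]
  split_ifs <;> simp

theorem exists_sq_eq_and_neg_I_pow_eq_neg_pow {N : ℕ} {c : ℂ} (hN : 0 < N)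
    (hc : (N % 4 = 0 ∧ c = Complex.exp (2 * Real.pi * Complex.I / N)) ∨ (N % 4 = 2 ∧ c = 1)) :
    ∃ ζ : ℂ, ‖ζ‖ = 1 ∧ c = ζ ^ 2 ∧ (-Complex.I) ^ N = -ζ ^ N := by
  have hI4 : (-Complex.I) ^ 4 = 1 := by norm_num
  rcases hc with ⟨hN4, rfl⟩ | ⟨hN4, rfl⟩
  · refine ⟨Complex.exp (Real.pi / N * Complex.I), ?_, ?_, ?_⟩
    · exact_mod_cast Complex.norm_exp_ofReal_mul_I (Real.pi / N)
    · rw [← Complex.exp_nat_mul]; push_cast; ring_nf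
    · obtain ⟨m, rfl⟩ := Nat.dvd_of_mod_eq_zero hN4
      have hm : (m : ℂ) ≠ 0 := by exact_mod_cast (by omega : m ≠ 0)
      have harg : ((4 * m : ℕ) : ℂ) * (Real.pi / ((4 * m : ℕ) : ℂ) * Complex.I) =
          Real.pi * Complex.I := by field_simp
      rw [← Complex.exp_nat_mul, pow_mul, hI4, one_pow, harg, Complex.exp_pi_mul_I, neg_neg]
  · refine ⟨1, norm_one, by norm_num, ?_⟩
    rw [← Nat.div_add_mod N 4, hN4, pow_add, pow_mul, hI4]
    norm_num

/-- For `N` even and a scalar `c` with either (`N ≡ 0 (mod 4)` and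
`c = e^{2πi/N}`) or (`N ≡ 2 (mod 4)` and `c = 1`), there is no `A ∈ SU(N)` with
`A = c J Ā J`; i.e. the fixed-point set of `A ↦ c J Ā J` on `SU(N)` is empty. -/
theorem stmt_18 (N : ℕ) (hN : 0 < N) (hNe : Even N) (c : ℂ)
    (hc : (N % 4 = 0 ∧ c = Complex.exp (2 * Real.pi * Complex.I / N)) ∨
          (N % 4 = 2 ∧ c = 1)) :
    ¬ ∃ A ∈ Matrix.specialUnitaryGroup (Fin N) ℂ,
        A = c • (blockJ N * A.map (starRingEnd ℂ) * blockJ N) := by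
  rintro ⟨A, hA, hAJ⟩
  obtain ⟨ζ, hζ, rfl, hζN⟩ := exists_sq_eq_and_neg_I_pow_eq_neg_pow hN hc
  have hζ0 : ζ ≠ 0 := norm_ne_zero_iff.mp (hζ ▸ one_ne_zero)
  -- `conj ζ = ζ⁻¹` gives `conj s = -(s * ζ ^ 2)`, and `s ^ N = (-I) ^ N / ζ ^ N = -1`.
  set s := -Complex.I * ζ⁻¹
  have hs : starRingEnd ℂ s = -(s * ζ ^ 2) := by
    simp only [s, map_mul, map_neg, Complex.conj_I, map_inv₀, ← Complex.inv_eq_conj hζ,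
      inv_inv]
    field_simp
  have hdet : (s • A).det = -1 := by
    rw [det_smul, Fintype.card_fin, (mem_specialUnitaryGroup_iff.mp hA).2, mul_one, mul_pow, hζN,
      inv_pow]
    field_simp
  have hJ : blockJ N * (blockJ N).map (starRingEnd ℂ) = -1 := by
    rw [blockJ_map_conj, blockJ_mul_self hNe]
  have hB := smul_mul_eq_mul_map_conj_smul (blockJ_mul_self hNe) hAJ hs
  have hdet_nonneg := det_nonneg_of_mul_eq_mul_map_conj hJ hB
  rw [hdet] at hdet_nonneg
  norm_num at hdet_nonneg
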